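/- Let d ≥ 1 and let L ≥ 1 be an integer. Let v_1, …, v_{L} ∈ [0,1]^d and w_1, …, w_{L} ∈ [0,1]^d, and define two sequences by x_1 = y_1 = 0, x_{k+1} = x_k + (1/L)·v_k ⊙ (1 − x_k), and y_{k+1} = y_k + (1/L)·w_k ⊙ (1 − y_k), for k = 1, …, L. Then for every k ∈ {1, …, L+1}: ‖x_k − y_k‖ ≤ (2/L)·Σ_{τ=1}^{k−1} ‖v_τ − w_τ‖, where ‖·‖ is the Euclidean norm. -/

import Mathlib

open MeasureTheory Finset

noncomputable section

/-- The unit cube `[0,1]^d` in `ℝ^d` (with Euclidean structure). -/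
def cube (d : ℕ) : Set (EuclideanSpace ℝ (Fin d)) :=
  {x | ∀ i, x i ∈ Set.Icc (0 : ℝ) 1}

/-- Coordinatewise (Hadamard) product on `ℝ^d`. -/
def had {d : ℕ} (x y : EuclideanSpace ℝ (Fin d)) : EuclideanSpace ℝ (Fin d) :=
  WithLp.toLp 2 (fun i => x i * y i)

/-- The all-ones vector in `ℝ^d`. -/
def onesV (d : ℕ) : EuclideanSpace ℝ (Fin d) := WithLp.toLp 2 (fun _ => 1)

/-- `K ⊆ ℝ^d` is downward closed (relative to the nonnegative orthant): together with any
`y ∈ K` it contains every `x` with `0 ≤ x ≤ y` coordinatewise. -/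
def DownwardClosed (d : ℕ) (K : Set (EuclideanSpace ℝ (Fin d))) : Prop :=
  ∀ y ∈ K, ∀ x : EuclideanSpace ℝ (Fin d), (∀ i, 0 ≤ x i) → (∀ i, x i ≤ y i) → x ∈ K

/-- `f` is continuous DR-submodular on the unit cube `[0,1]^d`. -/
def DRSubmodularOn (d : ℕ) (f : EuclideanSpace ℝ (Fin d) → ℝ) : Prop :=
  ∀ x y : EuclideanSpace ℝ (Fin d), x ∈ cube d → y ∈ cube d → (∀ i, x i ≤ y i) →
    ∀ (j : Fin d) (z : ℝ), 0 ≤ z →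
      x + z • EuclideanSpace.single j (1 : ℝ) ∈ cube d →
      y + z • EuclideanSpace.single j (1 : ℝ) ∈ cube d →
      f (y + z • EuclideanSpace.single j (1 : ℝ)) - f y ≤
        f (x + z • EuclideanSpace.single j (1 : ℝ)) - f x

/-!
With `t = 1/L`, one step of the two recursions gives
`x' - y' = (1 - t v) ⊙ (x - y) + t (1 - y) ⊙ (v - w)`. Since the iterates stay in `[0,1]^d`,
both multipliers have coordinates in `[-1,1]`, and coordinatewise multiplication by such a
vector does not increase the Euclidean norm.
So the distance grows by at most `‖v_k - w_k‖ / L` per step, and summing gives the bound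
even with `1/L` in place of `2/L`.
-/

def fwStep {d : ℕ} (t : ℝ) (v x : EuclideanSpace ℝ (Fin d)) : EuclideanSpace ℝ (Fin d) :=
  x + t • had v (onesV d - x)

section FrankWolfeStep

variable {d : ℕ}

@[simp]
lemma had_apply (a b : EuclideanSpace ℝ (Fin d)) (i : Fin d) : had a b i = a i * b i := rfl

@[simp]
lemma onesV_apply (i : Fin d) : onesV d i = 1 := rfl

lemma norm_had_le {a : EuclideanSpace ℝ (Fin d)} (ha : ∀ i, |a i| ≤ 1)
    (b : EuclideanSpace ℝ (Fin d)) : ‖had a b‖ ≤ ‖b‖ := by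
  rw [EuclideanSpace.norm_eq, EuclideanSpace.norm_eq]
  gcongr with i
  rw [had_apply, norm_mul]
  exact mul_le_of_le_one_left (norm_nonneg _) (ha i)

lemma fwStep_mem_cube {t : ℝ} (ht₀ : 0 ≤ t) (ht₁ : t ≤ 1)
    {v x : EuclideanSpace ℝ (Fin d)} (hv : v ∈ cube d) (hx : x ∈ cube d) : fwStep t v x ∈ cube d := by
  intro i
  obtain ⟨hv₀, hv₁⟩ := hv i
  obtain ⟨hx₀, hx₁⟩ := hx i
  simp only [fwStep, PiLp.add_apply, PiLp.smul_apply, PiLp.sub_apply, had_apply, onesV_apply,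
    smul_eq_mul, Set.mem_Icc]
  -- `1 - x' = (1 - t v) (1 - x)`
  constructor <;> nlinarith [mul_nonneg ht₀ hv₀, mul_le_one₀ ht₁ hv₀ hv₁]

lemma fwStep_sub_fwStep (t : ℝ) (v w x y : EuclideanSpace ℝ (Fin d)) :
    fwStep t v x - fwStep t w y =
      had (onesV d - t • v) (x - y) + t • had (onesV d - y) (v - w) := by
  ext i
  simp only [fwStep, PiLp.add_apply, PiLp.smul_apply, PiLp.sub_apply, had_apply, onesV_apply,
    smul_eq_mul]
  ring

lemma norm_fwStep_sub_fwStep_le {t : ℝ} (ht₀ : 0 ≤ t) (ht₁ : t ≤ 1)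
    {v y : EuclideanSpace ℝ (Fin d)} (hv : v ∈ cube d) (hy : y ∈ cube d)
    (w x : EuclideanSpace ℝ (Fin d)) :
    ‖fwStep t v x - fwStep t w y‖ ≤ ‖x - y‖ + t * ‖v - w‖ := by
  have hcontract : ∀ i, |(onesV d - t • v) i| ≤ 1 := by
    intro i
    obtain ⟨hv₀, hv₁⟩ := hv i
    simp only [PiLp.sub_apply, PiLp.smul_apply, onesV_apply, smul_eq_mul, abs_le]
    constructor <;> nlinarith [mul_nonneg ht₀ hv₀, mul_le_one₀ ht₁ hv₀ hv₁]
  have hperturb : ∀ i, |(onesV d - y) i| ≤ 1 := by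
    intro i
    obtain ⟨hy₀, hy₁⟩ := hy i
    simp only [PiLp.sub_apply, onesV_apply, abs_le]
    constructor <;> linarith
  calc ‖fwStep t v x - fwStep t w y‖
      ≤ ‖had (onesV d - t • v) (x - y)‖ + ‖t • had (onesV d - y) (v - w)‖ := by
        rw [fwStep_sub_fwStep]; exact norm_add_le _ _
    _ ≤ ‖x - y‖ + t * ‖v - w‖ := by
        rw [norm_smul, Real.norm_of_nonneg ht₀]
        gcongr
        exacts [norm_had_le hcontract _, norm_had_le hperturb _]

end FrankWolfeStep

lemma le_sum_Icc_of_le_add {α : Type*} [AddCommMonoid α] [PartialOrder α]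
    [IsOrderedAddMonoid α] {e c : ℕ → α} {L : ℕ} (h₁ : e 1 ≤ 0)
    (hstep : ∀ k, 1 ≤ k → k ≤ L → e (k + 1) ≤ e k + c k) :
    ∀ k, 1 ≤ k → k ≤ L + 1 → e k ≤ ∑ τ ∈ Icc 1 (k - 1), c τ := by
  intro k hk
  induction k, hk using Nat.le_induction with
  | base => simpa using h₁
  | succ k hk ih =>
    intro hkL
    obtain ⟨m, rfl⟩ : ∃ m, k = m + 1 := ⟨k - 1, by omega⟩
    calc e (m + 1 + 1) ≤ e (m + 1) + c (m + 1) := hstep _ hk (by omega)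
      _ ≤ ∑ τ ∈ Icc 1 m, c τ + c (m + 1) := by gcongr; exact ih (by omega)
      _ = ∑ τ ∈ Icc 1 (m + 1 + 1 - 1), c τ := (sum_Icc_succ_top (by omega) c).symm

lemma fwIterates_mem_cube {d L : ℕ} {v x : ℕ → EuclideanSpace ℝ (Fin d)}
    (hv : ∀ k, 1 ≤ k → k ≤ L → v k ∈ cube d) (hx₁ : x 1 = 0)
    (hxrec : ∀ k, 1 ≤ k → k ≤ L → x (k + 1) = fwStep (L : ℝ)⁻¹ (v k) (x k)) :
    ∀ k, 1 ≤ k → k ≤ L + 1 → x k ∈ cube d := by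
  intro k hk
  induction k, hk using Nat.le_induction with
  | base => intro _ i; simp [hx₁]
  | succ k hk ih =>
    intro hkL
    rw [hxrec k hk (by omega)]
    exact fwStep_mem_cube (by positivity) (Nat.cast_inv_le_one L) (hv k hk (by omega))
      (ih (by omega))

theorem frank_wolfe_iterates_stability_general
    (d : ℕ)
    (L : ℕ)
    (v w : ℕ → EuclideanSpace ℝ (Fin d))
    (hv : ∀ k, 1 ≤ k → k ≤ L → v k ∈ cube d)
    (hw : ∀ k, 1 ≤ k → k ≤ L → w k ∈ cube d)
    (x y : ℕ → EuclideanSpace ℝ (Fin d))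
    (hx1 : x 1 = 0) (hy1 : y 1 = 0)
    (hxrec : ∀ k, 1 ≤ k → k ≤ L →
      x (k + 1) = x k + (L : ℝ)⁻¹ • had (v k) (onesV d - x k))
    (hyrec : ∀ k, 1 ≤ k → k ≤ L →
      y (k + 1) = y k + (L : ℝ)⁻¹ • had (w k) (onesV d - y k)) :
    ∀ k, 1 ≤ k → k ≤ L + 1 →
      ‖x k - y k‖ ≤ (2 / (L : ℝ)) * ∑ τ ∈ Finset.Icc 1 (k - 1), ‖v τ - w τ‖ := by
  intro k hk hkL
  have hy : ∀ k, 1 ≤ k → k ≤ L + 1 → y k ∈ cube d := fwIterates_mem_cube hw hy1 hyrec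
  have hstep : ∀ k, 1 ≤ k → k ≤ L →
      ‖x (k + 1) - y (k + 1)‖ ≤ ‖x k - y k‖ + (L : ℝ)⁻¹ * ‖v k - w k‖ := by
    intro k hk hkL
    rw [hxrec k hk hkL, hyrec k hk hkL]
    exact norm_fwStep_sub_fwStep_le (by positivity) (Nat.cast_inv_le_one L) (hv k hk hkL)
      (hy k hk (by omega)) _ _
  calc ‖x k - y k‖ ≤ ∑ τ ∈ Icc 1 (k - 1), (L : ℝ)⁻¹ * ‖v τ - w τ‖ :=
        le_sum_Icc_of_le_add (e := fun k => ‖x k - y k‖)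
          (by rw [hx1, hy1, sub_self, norm_zero]) hstep k hk hkL
    _ = (L : ℝ)⁻¹ * ∑ τ ∈ Icc 1 (k - 1), ‖v τ - w τ‖ := (mul_sum _ _ _).symm
    _ ≤ (2 / (L : ℝ)) * ∑ τ ∈ Icc 1 (k - 1), ‖v τ - w τ‖ := by
        gcongr
        rw [div_eq_mul_inv]
        exact le_mul_of_one_le_left (by positivity) one_le_two

/-- consensus-error propagation through the local Frank–Wolfe
iterations: two iterate sequences driven by update directions `v` and `w` satisfy
`‖x_k - y_k‖ ≤ (2/L) Σ_{τ=1}^{k-1} ‖v_τ - w_τ‖`. -/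
theorem frank_wolfe_iterates_stability
    (d : ℕ) (hd : 1 ≤ d)
    (L : ℕ) (hL : 1 ≤ L)
    (v w : ℕ → EuclideanSpace ℝ (Fin d))
    (hv : ∀ k, 1 ≤ k → k ≤ L → v k ∈ cube d)
    (hw : ∀ k, 1 ≤ k → k ≤ L → w k ∈ cube d)
    (x y : ℕ → EuclideanSpace ℝ (Fin d))
    (hx1 : x 1 = 0) (hy1 : y 1 = 0)
    (hxrec : ∀ k, 1 ≤ k → k ≤ L →
      x (k + 1) = x k + (L : ℝ)⁻¹ • had (v k) (onesV d - x k))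
    (hyrec : ∀ k, 1 ≤ k → k ≤ L →
      y (k + 1) = y k + (L : ℝ)⁻¹ • had (w k) (onesV d - y k)) :
    ∀ k, 1 ≤ k → k ≤ L + 1 →
      ‖x k - y k‖ ≤ (2 / (L : ℝ)) * ∑ τ ∈ Finset.Icc 1 (k - 1), ‖v τ - w τ‖ :=
  frank_wolfe_iterates_stability_general d L v w hv hw x y hx1 hy1 hxrec hyrec
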